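/- arXiv:1610.03523 — 2 statements merged into one kernel-verified Lean document; each statement's English description precedes it below -/
import Mathlib

section
/- Let V and W be complex Hilbert spaces, B, B' ∈ Hom(W,V), and C, C' ∈ End⁺W (self-adjoint positive invertible). Then (B + B')(C + C')⁻¹(B + B')* ≤ B C⁻¹ B* + B' C'⁻¹ B'*. -/
/-!
For a positive invertible `C`, completing the square gives
`re ⟪C⁻¹ x, x⟫ = sup_w (2 re ⟪x, w⟫ - re ⟪C w, w⟫)`, the supremum being attained at
`w = C⁻¹ x`. Evaluating the form of `(C + C')⁻¹` at `x + x'` at its maximiser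
`w = (C + C')⁻¹ (x + x')` splits it into the expressions for `(C, x)` and `(C', x')` at this
common `w`, each bounded by its supremum. Taking `x = B* v`, `x' = B'* v` gives the inequality.
Invertibility of `C` comes from `ε ≤ C` in the C⋆-algebra of operators.
-/

open Complex Metric Filter Set ContinuousLinearMap
open scoped InnerProductSpace

noncomputable section

variable {V W : Type*} [NormedAddCommGroup V] [InnerProductSpace ℂ V] [CompleteSpace V]
  [NormedAddCommGroup W] [InnerProductSpace ℂ W] [CompleteSpace W]

/-- Loewner order on operators: `opLE S T` means `S ≤ T`. -/
def opLE (S T : V →L[ℂ] V) : Prop := ∀ v : V, 0 ≤ (T - S).reApplyInnerSelf v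

/-- `End⁺W`: self-adjoint positive invertible operators. -/
def IsPosInv (P : W →L[ℂ] W) : Prop :=
  IsSelfAdjoint P ∧ ∃ ε : ℝ, 0 < ε ∧ ∀ w : W, ε * ‖w‖ ^ 2 ≤ P.reApplyInnerSelf w

namespace ContinuousLinearMap

variable {𝕜 E F : Type*} [RCLike 𝕜] [NormedAddCommGroup E] [InnerProductSpace 𝕜 E]
  [NormedAddCommGroup F] [InnerProductSpace 𝕜 F]

theorem reApplyInnerSelf_add (S T : E →L[𝕜] E) (x : E) :
    (S + T).reApplyInnerSelf x = S.reApplyInnerSelf x + T.reApplyInnerSelf x := by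
  simp only [reApplyInnerSelf_apply, add_apply, inner_add_left, map_add]

theorem reApplyInnerSelf_sub (S T : E →L[𝕜] E) (x : E) :
    (S - T).reApplyInnerSelf x = S.reApplyInnerSelf x - T.reApplyInnerSelf x := by
  simp only [reApplyInnerSelf_apply, sub_apply, inner_sub_left, map_sub]

theorem reApplyInnerSelf_comp_comp_adjoint [CompleteSpace E] [CompleteSpace F]
    (B : E →L[𝕜] F) (D : E →L[𝕜] E) (v : F) :
    (B ∘L D ∘L adjoint B).reApplyInnerSelf v = D.reApplyInnerSelf (adjoint B v) := by
  rw [reApplyInnerSelf_apply, comp_apply, comp_apply, ← adjoint_inner_right,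
    reApplyInnerSelf_apply]

theorem apply_inverse_apply {C : E →L[𝕜] E} (hC : IsUnit C) (x : E) :
    C (Ring.inverse C x) = x := by
  rw [← mul_apply_eq_comp, Ring.mul_inverse_cancel C hC, one_apply_eq_self]

theorem IsPositive.two_mul_re_inner_sub_le_reApplyInnerSelf_inverse {C : E →L[𝕜] E}
    (hC : C.IsPositive) (hCu : IsUnit C) (x w : E) :
    2 * RCLike.re ⟪x, w⟫_𝕜 - C.reApplyInnerSelf w ≤ (Ring.inverse C).reApplyInnerSelf x := by
  set y := Ring.inverse C x
  have hCy : C y = x := apply_inverse_apply hCu x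
  have hexp : ⟪C (w - y), w - y⟫_𝕜 = ⟪C w, w⟫_𝕜 - ⟪w, x⟫_𝕜 - ⟪x, w⟫_𝕜 + ⟪x, y⟫_𝕜 := by
    rw [map_sub, inner_sub_left, inner_sub_right, inner_sub_right, hCy,
      hC.inner_left_eq_inner_right w y, hCy]
    ring
  have hsq := hC.re_inner_nonneg_left (w - y)
  rw [hexp] at hsq
  simp only [map_add, map_sub, inner_re_symm w x, inner_re_symm x y] at hsq
  rw [reApplyInnerSelf_apply, reApplyInnerSelf_apply]
  linarith

theorem reApplyInnerSelf_inverse_add_le {C C' : E →L[𝕜] E} (hC : C.IsPositive)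
    (hC' : C'.IsPositive) (hCu : IsUnit C) (hCu' : IsUnit C') (hu : IsUnit (C + C'))
    (x x' : E) :
    (Ring.inverse (C + C')).reApplyInnerSelf (x + x') ≤
      (Ring.inverse C).reApplyInnerSelf x + (Ring.inverse C').reApplyInnerSelf x' := by
  set w := Ring.inverse (C + C') (x + x')
  have hw : C w + C' w = x + x' := apply_inverse_apply hu (x + x')
  have hsplit : C.reApplyInnerSelf w + C'.reApplyInnerSelf w =
      RCLike.re ⟪x, w⟫_𝕜 + RCLike.re ⟪x', w⟫_𝕜 := by
    simp only [reApplyInnerSelf_apply, ← map_add, ← inner_add_left, hw]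
  have hlhs : (Ring.inverse (C + C')).reApplyInnerSelf (x + x') =
      RCLike.re ⟪x, w⟫_𝕜 + RCLike.re ⟪x', w⟫_𝕜 := by
    rw [reApplyInnerSelf_apply, ← map_add, ← inner_add_left, inner_re_symm]
  have hx := hC.two_mul_re_inner_sub_le_reApplyInnerSelf_inverse hCu x w
  have hx' := hC'.two_mul_re_inner_sub_le_reApplyInnerSelf_inverse hCu' x' w
  linarith

end ContinuousLinearMap

theorem IsPosInv.isStrictlyPositive {C : W →L[ℂ] W} (h : IsPosInv C) : IsStrictlyPositive C := by
  obtain ⟨hsa, ε, hε, hcoer⟩ := h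
  refine (isStrictlyPositive_algebraMap (A := W →L[ℂ] W) hε).of_le ?_
  refine (le_def _ _).2 (isPositive_def'.2 ⟨hsa.sub (.algebraMap _ (.all ε)), fun w => ?_⟩)
  have hε_form : (algebraMap ℝ (W →L[ℂ] W) ε).reApplyInnerSelf w = ε * ‖w‖ ^ 2 := by
    rw [reApplyInnerSelf_apply, Algebra.algebraMap_eq_smul_one, smul_apply, one_apply_eq_self,
      inner_smul_left_eq_smul, inner_self_eq_norm_sq_to_K]
    norm_cast
  rw [reApplyInnerSelf_sub, hε_form]
  linarith [hcoer w]

/-- Lemma 4.5(i): subadditivity of `(B, C) ↦ B C⁻¹ B*`: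
`(B + B')(C + C')⁻¹(B + B')* ≤ B C⁻¹ B* + B' C'⁻¹ B'*`. -/
theorem schur_quotient_subadditive
    (B B' : W →L[ℂ] V) (C C' : W →L[ℂ] W)
    (hC : IsPosInv C) (hC' : IsPosInv C') :
    opLE ((B + B') ∘L Ring.inverse (C + C') ∘L ContinuousLinearMap.adjoint (B + B'))
      (B ∘L Ring.inverse C ∘L ContinuousLinearMap.adjoint B +
        B' ∘L Ring.inverse C' ∘L ContinuousLinearMap.adjoint B') := by
  have hCpos := hC.isStrictlyPositive
  have hCpos' := hC'.isStrictlyPositive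
  intro v
  rw [reApplyInnerSelf_sub, reApplyInnerSelf_add, sub_nonneg, reApplyInnerSelf_comp_comp_adjoint,
    reApplyInnerSelf_comp_comp_adjoint, reApplyInnerSelf_comp_comp_adjoint, map_add, add_apply]
  exact reApplyInnerSelf_inverse_add_le ((nonneg_iff_isPositive C).1 hCpos.nonneg)
    ((nonneg_iff_isPositive C').1 hCpos'.nonneg) hCpos.isUnit hCpos'.isUnit
    (hCpos.add_nonneg hCpos'.nonneg).isUnit _ _
end
end

section
/- Let V and W be complex Hilbert spaces, A = A*, A' = A'* ∈ End V, B, B' ∈ Hom(W,V), and C, C' ∈ End⁺W (self-adjoint positive invertible). If the block operators on the Hilbert direct sum V ⊕ W satisfy [[A, B],[B*, C]] ≤ [[A', B'],[B'*, C']] (i.e. (v,w) ↦ (Av+Bw, B*v+Cw) is dominated by (v,w) ↦ (A'v+B'w, B'*v+C'w) in the self-adjoint order on End(V ⊕ W)), then A − B C⁻¹ B* ≤ A' − B' C'⁻¹ B'*. -/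
open Complex Metric Filter Set ContinuousLinearMap

noncomputable section

variable {V W : Type*} [NormedAddCommGroup V] [InnerProductSpace ℂ V] [CompleteSpace V]
  [NormedAddCommGroup W] [InnerProductSpace ℂ W] [CompleteSpace W]

/-- The block operator `(v, w) ↦ (Av + Bw, B'v + Cw)` on the Hilbert space
direct sum `V ⊕ W`. -/
def blockOp (A : V →L[ℂ] V) (B : W →L[ℂ] V) (B' : V →L[ℂ] W) (C : W →L[ℂ] W) :
    WithLp 2 (V × W) →L[ℂ] WithLp 2 (V × W) :=
  ((WithLp.prodContinuousLinearEquiv 2 ℂ V W).symm : V × W →L[ℂ] WithLp 2 (V × W)) ∘L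
    ((A.coprod B).prod (B'.coprod C)) ∘L
      ((WithLp.prodContinuousLinearEquiv 2 ℂ V W) : WithLp 2 (V × W) →L[ℂ] V × W)

local notation "⟪" x ", " y "⟫" => @inner ℂ _ _ x y

/-- A self-adjoint coercive operator is invertible. -/
lemma IsPosInv.isUnit {C : W →L[ℂ] W} (hC : IsPosInv C) : IsUnit C := by
  obtain ⟨_, ε, hε, h⟩ := hC
  refine isUnit_of_forall_le_norm_inner_map C (c := ε.toNNReal) (by simpa using hε) fun x => ?_
  calc ‖x‖ ^ 2 * (ε.toNNReal : ℝ) = ε * ‖x‖ ^ 2 := by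
        rw [Real.coe_toNNReal _ hε.le]; ring
    _ ≤ RCLike.re ⟪C x, x⟫ := h x
    _ ≤ ‖(⟪C x, x⟫ : ℂ)‖ := RCLike.re_le_norm _

/-- The key algebraic identity: completing the square in the block quadratic form. -/
lemma quad_identity (A : V →L[ℂ] V) (B : W →L[ℂ] V) (C : W →L[ℂ] W)
    (hCsa : IsSelfAdjoint C) (hCu : IsUnit C) (v : V) (w : W) :
    (blockOp A B (ContinuousLinearMap.adjoint B) C).reApplyInnerSelf
      ((WithLp.prodContinuousLinearEquiv 2 ℂ V W).symm (v, w)) =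
    (A - B ∘L Ring.inverse C ∘L ContinuousLinearMap.adjoint B).reApplyInnerSelf v
      + C.reApplyInnerSelf
        (w + Ring.inverse C (ContinuousLinearMap.adjoint B v)) := by
  set D : W →L[ℂ] W := Ring.inverse C with hD
  set u : W := ContinuousLinearMap.adjoint B v with hu
  have hCD : ∀ x : W, C (D x) = x := by
    intro x
    have : C * D = 1 := Ring.mul_inverse_cancel C hCu
    simpa using DFunLike.congr_fun this x
  have hCadj : ContinuousLinearMap.adjoint C = C := isSelfAdjoint_iff'.mp hCsa
  have hDsa : IsSelfAdjoint D := by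
    simp only [IsSelfAdjoint, hD, ← Ring.inverse_star, hCsa.star_eq]
  have hDadj : ContinuousLinearMap.adjoint D = D := isSelfAdjoint_iff'.mp hDsa
  have hCsym : ∀ x y : W, ⟪C x, y⟫ = ⟪x, C y⟫ := by
    intro x y
    conv_rhs => rw [← hCadj]
    rw [ContinuousLinearMap.adjoint_inner_right]
  have lhs_eq : (blockOp A B (ContinuousLinearMap.adjoint B) C).reApplyInnerSelf
      ((WithLp.prodContinuousLinearEquiv 2 ℂ V W).symm (v, w)) =
      RCLike.re (⟪A v + B w, v⟫ + ⟪u + C w, w⟫) := rfl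
  rw [lhs_eq, ContinuousLinearMap.reApplyInnerSelf_apply,
    ContinuousLinearMap.reApplyInnerSelf_apply]
  rw [← map_add]
  congr 1
  -- now a pure complex-inner-product identity
  have h1 : ⟪B w, v⟫ = ⟪w, u⟫ := by
    rw [hu, ContinuousLinearMap.adjoint_inner_right]
  have h2 : ⟪B (D u), v⟫ = ⟪D u, u⟫ := by
    rw [hu, ContinuousLinearMap.adjoint_inner_right]
  have h3 : ⟪D u, u⟫ = ⟪u, D u⟫ := by
    conv_lhs => rw [← hDadj]
    exact ContinuousLinearMap.adjoint_inner_left D u u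
  simp only [ContinuousLinearMap.sub_apply, ContinuousLinearMap.comp_apply,
    map_add, inner_add_left, inner_add_right, inner_sub_left]
  rw [hCsym w (D u)]
  simp only [hCD]
  rw [h1, h2, h3]
  ring

/-- Lemma 4.5(ii): monotonicity of Schur complements:
if `[[A, B], [B*, C]] ≤ [[A', B'], [B'*, C']]` then
`A − B C⁻¹ B* ≤ A' − B' C'⁻¹ B'*`. -/
theorem schur_complement_monotone
    (A A' : V →L[ℂ] V) (hA : IsSelfAdjoint A) (hA' : IsSelfAdjoint A')
    (B B' : W →L[ℂ] V) (C C' : W →L[ℂ] W)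
    (hC : IsPosInv C) (hC' : IsPosInv C')
    (hle : ∀ x : WithLp 2 (V × W),
      (blockOp A B (ContinuousLinearMap.adjoint B) C).reApplyInnerSelf x ≤
        (blockOp A' B' (ContinuousLinearMap.adjoint B') C').reApplyInnerSelf x) :
    opLE (A - B ∘L Ring.inverse C ∘L ContinuousLinearMap.adjoint B)
      (A' - B' ∘L Ring.inverse C' ∘L ContinuousLinearMap.adjoint B') := by
  intro v
  set S := A - B ∘L Ring.inverse C ∘L ContinuousLinearMap.adjoint B with hS
  set S' := A' - B' ∘L Ring.inverse C' ∘L ContinuousLinearMap.adjoint B' with hS'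
  -- the minimizing `w` for the primed form
  set w' : W := -(Ring.inverse C' (ContinuousLinearMap.adjoint B' v)) with hw'
  have key : S.reApplyInnerSelf v ≤ S'.reApplyInnerSelf v := by
    have e1 := quad_identity A B C hC.1 hC.isUnit v w'
    have e2 := quad_identity A' B' C' hC'.1 hC'.isUnit v w'
    have hz : w' + Ring.inverse C' (ContinuousLinearMap.adjoint B' v) = 0 := by
      rw [hw']; abel
    rw [hz] at e2
    have hz2 : C'.reApplyInnerSelf (0 : W) = 0 := by
      simp [ContinuousLinearMap.reApplyInnerSelf_apply]
    rw [hz2, add_zero] at e2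
    have hpos : 0 ≤ C.reApplyInnerSelf
        (w' + Ring.inverse C (ContinuousLinearMap.adjoint B v)) := by
      obtain ⟨_, ε, hε, h⟩ := hC
      refine le_trans ?_ (h _)
      positivity
    have hle' := hle ((WithLp.prodContinuousLinearEquiv 2 ℂ V W).symm (v, w'))
    rw [e1, e2] at hle'
    linarith
  have : (S' - S).reApplyInnerSelf v = S'.reApplyInnerSelf v - S.reApplyInnerSelf v := by
    simp [ContinuousLinearMap.reApplyInnerSelf_apply, ContinuousLinearMap.sub_apply,
      inner_sub_left]
  rw [this]
  linarith
end
end
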